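/- Let M be a spectral space and B a commutative ring. The canonical B-linear map Cons(M, ℤ) ⊗_ℤ B → Cons(M, B), sending φ ⊗ b to the function x ↦ φ(x)·b, is an isomorphism of B-modules. -/

import Mathlib

/-- A spectral space: quasi-compact, quasi-separated, sober, and the
quasi-compact open subsets form a basis of the topology. -/
def SpectralSpace' (X : Type*) [TopologicalSpace X] : Prop :=
  CompactSpace X ∧ QuasiSeparatedSpace X ∧ QuasiSober X ∧ T0Space X ∧
    TopologicalSpace.IsTopologicalBasis {U : Set X | IsOpen U ∧ IsCompact U}

/-- The constructible subsets: the smallest class of subsets containing the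
quasi-compact open subsets and stable under complements and finite unions
(hence also finite intersections). -/
inductive IsConstr {X : Type*} [TopologicalSpace X] : Set X → Prop
  | qcOpen : ∀ U : Set X, IsOpen U → IsCompact U → IsConstr U
  | compl : ∀ A : Set X, IsConstr A → IsConstr Aᶜ
  | union : ∀ A B : Set X, IsConstr A → IsConstr B → IsConstr (A ∪ B)

/-- A constructible function: there is a finite partition of the space into
locally closed constructible subsets on each of which the function is constant. -/
def IsConsFun {X : Type*} [TopologicalSpace X] {B : Type*} (φ : X → B) : Prop :=
  ∃ (n : ℕ) (P : Fin n → Set X),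
    (∀ i, IsLocallyClosed (P i) ∧ IsConstr (P i)) ∧
    (∀ x, ∃! i, x ∈ P i) ∧
    ∀ i, ∀ x ∈ P i, ∀ y ∈ P i, φ x = φ y

open scoped TensorProduct

/-!
A constructible function is constant on the pieces of a finite partition of `M` into locally
closed constructible sets, and two such partitions have a common refinement. Hence every element
of `B ⊗ Cons(M, ℤ)` comes from `B ⊗ ℤ^P ≅ B^P` for a single partition `P`, and on `B^P` the
map to `M → B` is pulling back along the surjection `M → P`: it is injective, with image the
functions constant on the pieces of `P`.
-/

section ConstructibleFunctions

open Function LinearMap TensorProduct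

variable {M : Type*} [TopologicalSpace M]

lemma IsConstr.inter {A B : Set M} (hA : IsConstr A) (hB : IsConstr B) : IsConstr (A ∩ B) := by
  simpa using (IsConstr.union _ _ hA.compl hB.compl).compl

lemma IsConstr.univ : IsConstr (Set.univ : Set M) := by
  simpa using (IsConstr.qcOpen ∅ isOpen_empty isCompact_empty).compl

namespace Setoid

/-- A finite partition of `M` into locally closed constructible pieces, recorded as the
equivalence relation whose classes are the pieces; common refinement is then `⊓`. -/
structure IsConsPartition (s : Setoid M) : Prop where
  finite_quotient : Finite (Quotient s)
  isLocallyClosed_fiber (q : Quotient s) : IsLocallyClosed (Quotient.mk s ⁻¹' {q})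
  isConstr_fiber (q : Quotient s) : IsConstr (Quotient.mk s ⁻¹' {q})

lemma isConsPartition_top : (⊤ : Setoid M).IsConsPartition := by
  have : Subsingleton (Quotient (⊤ : Setoid M)) := Quotient.subsingleton_iff.2 rfl
  have hfiber (q : Quotient (⊤ : Setoid M)) : Quotient.mk _ ⁻¹' {q} = Set.univ :=
    Set.eq_univ_of_forall fun _ => Subsingleton.elim _ _
  exact ⟨inferInstance, fun q => hfiber q ▸ isOpen_univ.isLocallyClosed,
    fun q => hfiber q ▸ IsConstr.univ⟩

lemma mk_preimage_singleton_inf {α : Type*} {s t : Setoid α} (x : α) :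
    Quotient.mk (s ⊓ t) ⁻¹' {Quotient.mk _ x} =
      Quotient.mk s ⁻¹' {Quotient.mk _ x} ∩ Quotient.mk t ⁻¹' {Quotient.mk _ x} := by
  ext y
  simp only [Set.mem_preimage, Set.mem_singleton_iff, Set.mem_inter_iff, Quotient.eq]
  rfl

lemma IsConsPartition.inf {s t : Setoid M} (hs : s.IsConsPartition) (ht : t.IsConsPartition) :
    (s ⊓ t).IsConsPartition := by
  have := hs.finite_quotient
  have := ht.finite_quotient
  refine ⟨?_, ?_, ?_⟩
  · refine Finite.of_injective (fun q : Quotient (s ⊓ t) =>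
      (Setoid.map_of_le inf_le_left q, Setoid.map_of_le inf_le_right q)) ?_
    rintro ⟨x⟩ ⟨y⟩ h
    simp only [Prod.mk.injEq] at h
    exact Quotient.sound ⟨Quotient.exact h.1, Quotient.exact h.2⟩
  · rintro ⟨x⟩
    exact mk_preimage_singleton_inf (s := s) (t := t) x ▸
      (hs.isLocallyClosed_fiber _).inter (ht.isLocallyClosed_fiber _)
  · rintro ⟨x⟩
    exact mk_preimage_singleton_inf (s := s) (t := t) x ▸
      (hs.isConstr_fiber _).inter (ht.isConstr_fiber _)

end Setoid

lemma isConsFun_iff {R : Type*} (φ : M → R) :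
    IsConsFun φ ↔ ∃ s : Setoid M, s.IsConsPartition ∧ s ≤ Setoid.ker φ := by
  constructor
  · rintro ⟨n, P, hP, hcover, hconst⟩
    choose π hπ hπ_unique using hcover
    have hfiber (x : M) : Quotient.mk (Setoid.ker π) ⁻¹' {Quotient.mk _ x} = P (π x) := by
      ext y
      simp only [Set.mem_preimage, Set.mem_singleton_iff, Quotient.eq, Setoid.ker_def]
      exact ⟨fun h => h ▸ hπ y, fun h => (hπ_unique y _ h).symm⟩
    refine ⟨Setoid.ker π, ⟨?_, ?_, ?_⟩, fun x y h => hconst (π x) x (hπ x) y ?_⟩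
    · exact Finite.of_injective _ (Setoid.kerLift_injective π)
    · exact fun q => q.inductionOn fun x => hfiber x ▸ (hP _).1
    · exact fun q => q.inductionOn fun x => hfiber x ▸ (hP _).2
    · exact (Setoid.ker_def.1 h).symm ▸ hπ y
  · rintro ⟨s, hs, hsφ⟩
    have := hs.finite_quotient
    let e := Finite.equivFin (Quotient s)
    refine ⟨Nat.card (Quotient s), fun i => Quotient.mk s ⁻¹' {e.symm i},
      fun i => ⟨hs.isLocallyClosed_fiber _, hs.isConstr_fiber _⟩,
      fun x => ⟨e (Quotient.mk s x), by simp,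
        fun i (hi : Quotient.mk s x = e.symm i) => by rw [hi, e.apply_symm_apply]⟩,
      fun i x hx y hy => hsφ (Quotient.exact (hx.trans hy.symm))⟩

lemma Setoid.range_funLeft_mk {α : Type*} (R : Type*) [Semiring R] (s : Setoid α) :
    Set.range (funLeft R R (Quotient.mk s)) = {ψ | s ≤ Setoid.ker ψ} := by
  ext ψ
  refine ⟨?_, fun h => ⟨Quotient.lift ψ h, rfl⟩⟩
  rintro ⟨g, rfl⟩ x y hxy
  exact congrArg g (Quotient.sound hxy)

variable (M) in
def consFun (R : Type*) [Semiring R] : Submodule R (M → R) where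
  carrier := {φ | IsConsFun φ}
  zero_mem' := (isConsFun_iff _).2 ⟨⊤, Setoid.isConsPartition_top, fun _ _ _ => rfl⟩
  add_mem' := by
    rintro φ ψ hφ hψ
    obtain ⟨s, hs, hsφ⟩ := (isConsFun_iff φ).1 hφ
    obtain ⟨t, ht, htψ⟩ := (isConsFun_iff ψ).1 hψ
    refine (isConsFun_iff _).2 ⟨s ⊓ t, hs.inf ht, fun x y h => ?_⟩
    exact congrArg₂ (· + ·) (hsφ h.1) (htψ h.2)
  smul_mem' := by
    rintro c φ hφ
    obtain ⟨s, hs, hsφ⟩ := (isConsFun_iff φ).1 hφ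
    refine (isConsFun_iff _).2 ⟨s, hs, fun x y h => ?_⟩
    exact congrArg (c • ·) (hsφ h)

section BaseChange

variable {R : Type*} [CommSemiring R] {s : Setoid M}

def Setoid.IsConsPartition.toConsFun (hs : s.IsConsPartition) :
    (Quotient s → R) →ₗ[R] consFun M R :=
  (funLeft R R (Quotient.mk s)).codRestrict _ fun g => (isConsFun_iff _).2
    ⟨s, hs, (Setoid.range_funLeft_mk R s).le ⟨g, rfl⟩⟩

variable (A : Type*) [Semiring A] [Algebra R A]

lemma Setoid.IsConsPartition.range_baseChange_toConsFun_le_of_le {t : Setoid M}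
    (hs : s.IsConsPartition) (ht : t.IsConsPartition) (hst : s ≤ t) :
    range ((ht.toConsFun (R := R)).baseChange A) ≤ range (hs.toConsFun.baseChange A) := by
  have : ht.toConsFun (R := R) = hs.toConsFun ∘ₗ funLeft R R (Setoid.map_of_le hst) := by
    ext g x
    rfl
  rw [this, baseChange_comp]
  exact range_comp_le_range _ _

lemma exists_isConsPartition_mem_range_baseChange (t : A ⊗[R] consFun M R) :
    ∃ (s : Setoid M) (hs : s.IsConsPartition), t ∈ range (hs.toConsFun.baseChange A) := by
  induction t using TensorProduct.induction_on with
  | zero => exact ⟨⊤, Setoid.isConsPartition_top, zero_mem _⟩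
  | tmul a φ =>
    obtain ⟨s, hs, hsφ⟩ := (isConsFun_iff (φ : M → R)).1 φ.2
    obtain ⟨g, hg⟩ := (Setoid.range_funLeft_mk R s).ge hsφ
    have hφ : hs.toConsFun g = φ := Subtype.ext hg
    exact ⟨s, hs, a ⊗ₜ g, by rw [baseChange_tmul, hφ]⟩
  | add t₁ t₂ ih₁ ih₂ =>
    obtain ⟨s₁, hs₁, h₁⟩ := ih₁
    obtain ⟨s₂, hs₂, h₂⟩ := ih₂
    have hs := hs₁.inf hs₂
    exact ⟨s₁ ⊓ s₂, hs,
      add_mem (hs.range_baseChange_toConsFun_le_of_le A hs₁ inf_le_left h₁)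
        (hs.range_baseChange_toConsFun_le_of_le A hs₂ inf_le_right h₂)⟩

end BaseChange

section IntegralBaseChange

variable (B : Type*) [CommRing B]

variable (M) in
noncomputable def consFunBaseChange : B ⊗[ℤ] consFun M ℤ →ₗ[B] (M → B) :=
  (LinearMap.compLeft (Int.castAddHom B).toIntLinearMap M ∘ₗ
    (consFun M ℤ).subtype).liftBaseChange B

lemma consFunBaseChange_tmul (b : B) (φ : consFun M ℤ) :
    consFunBaseChange M B (b ⊗ₜ φ) = fun x => b * ((φ : M → ℤ) x : B) := by
  ext x
  simp [consFunBaseChange, smul_eq_mul]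

variable {B} {s : Setoid M}

lemma Setoid.IsConsPartition.consFunBaseChange_comp_baseChange_toConsFun
    (hs : s.IsConsPartition) [Fintype (Quotient s)] [DecidableEq (Quotient s)] :
    consFunBaseChange M B ∘ₗ hs.toConsFun.baseChange B =
      funLeft B B (Quotient.mk s) ∘ₗ (piScalarRight ℤ B B (Quotient s)).toLinearMap := by
  ext g x
  simp [consFunBaseChange_tmul, funLeft_apply]
  rfl

lemma Setoid.IsConsPartition.injective_consFunBaseChange_comp (hs : s.IsConsPartition) :
    Injective (consFunBaseChange M B ∘ₗ hs.toConsFun.baseChange B) := by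
  have := hs.finite_quotient
  classical
  have := Fintype.ofFinite (Quotient s)
  rw [hs.consFunBaseChange_comp_baseChange_toConsFun, coe_comp, LinearEquiv.coe_coe]
  exact (funLeft_injective_of_surjective _ _ _ Quotient.mk_surjective).comp
    (piScalarRight ℤ B B (Quotient s)).injective

lemma Setoid.IsConsPartition.range_consFunBaseChange_comp (hs : s.IsConsPartition) :
    Set.range (consFunBaseChange M B ∘ₗ hs.toConsFun.baseChange B) =
      {ψ | s ≤ Setoid.ker ψ} := by
  have := hs.finite_quotient
  classical
  have := Fintype.ofFinite (Quotient s)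
  rw [hs.consFunBaseChange_comp_baseChange_toConsFun, coe_comp, Set.range_comp,
    LinearEquiv.coe_toLinearMap, EquivLike.range_eq_univ, Set.image_univ,
    Setoid.range_funLeft_mk]

variable (M B)

lemma injective_consFunBaseChange : Injective (consFunBaseChange M B) := by
  refine (injective_iff_map_eq_zero _).2 fun t ht => ?_
  obtain ⟨s, hs, u, rfl⟩ := exists_isConsPartition_mem_range_baseChange B t
  obtain rfl : u = 0 := hs.injective_consFunBaseChange_comp (by simpa using ht)
  exact map_zero _

lemma range_consFunBaseChange : Set.range (consFunBaseChange M B) = {ψ | IsConsFun ψ} := by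
  ext ψ
  constructor
  · rintro ⟨t, rfl⟩
    obtain ⟨s, hs, u, rfl⟩ := exists_isConsPartition_mem_range_baseChange B t
    exact (isConsFun_iff _).2 ⟨s, hs, hs.range_consFunBaseChange_comp.subset ⟨u, rfl⟩⟩
  · intro hψ
    obtain ⟨s, hs, hsψ⟩ := (isConsFun_iff ψ).1 hψ
    obtain ⟨u, rfl⟩ := hs.range_consFunBaseChange_comp.ge hsψ
    exact Set.mem_range_self _

end IntegralBaseChange

end ConstructibleFunctions

theorem consFun_baseChange_general
    {M : Type*} [TopologicalSpace M] (B : Type*) [CommRing B]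
    (N : Submodule ℤ (M → ℤ)) (hN : (N : Set (M → ℤ)) = {φ : M → ℤ | IsConsFun φ}) :
    ∃ L : (B ⊗[ℤ] N) →ₗ[B] (M → B),
      (∀ (b : B) (φ : N), L (b ⊗ₜ[ℤ] φ) = fun x => b * (((φ : M → ℤ) x : ℤ) : B)) ∧
      Function.Injective L ∧
      Set.range L = {ψ : M → B | IsConsFun ψ} := by
  obtain rfl : N = consFun M ℤ := SetLike.coe_injective hN
  exact ⟨consFunBaseChange M B, consFunBaseChange_tmul B, injective_consFunBaseChange M B,
    range_consFunBaseChange M B⟩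

/-- The canonical `B`-linear map `B ⊗_ℤ Cons(M, ℤ) → Cons(M, B)`, sending `b ⊗ φ` to
`x ↦ b · φ(x)`, is an isomorphism of `B`-modules: it exists, is injective, and its range
is exactly the set of `B`-valued constructible functions. -/
theorem consFun_baseChange
    {M : Type*} [TopologicalSpace M] (hM : SpectralSpace' M) (B : Type*) [CommRing B]
    (N : Submodule ℤ (M → ℤ)) (hN : (N : Set (M → ℤ)) = {φ : M → ℤ | IsConsFun φ}) :
    ∃ L : (B ⊗[ℤ] N) →ₗ[B] (M → B),
      (∀ (b : B) (φ : N), L (b ⊗ₜ[ℤ] φ) = fun x => b * (((φ : M → ℤ) x : ℤ) : B)) ∧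
      Function.Injective L ∧
      Set.range L = {ψ : M → B | IsConsFun ψ} :=
  consFun_baseChange_general B N hN
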